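/- arXiv:1401.3048 — 2 statements merged into one kernel-verified Lean document; each statement's English description precedes it below -/
import Mathlib

section
/- Let f, g be homogeneous polynomials in C[x_0,...,x_n] with V(f) smooth. Then the ideals I(f,g) = (f) + m_2(f,g) and J(f,g) = (f) + (g) + m_2(f,g) have the same radical. -/
/-!
If `f(q) = 0` and all `2 × 2` minors of the Jacobian of `(f, g)` vanish at `q ≠ 0`, pick `i` with
`∂ᵢf(q) ≠ 0` (smoothness). Euler's identity and the minors give
`e · g(q) · ∂ᵢf(q) = ∑ⱼ qⱼ ∂ⱼg(q) ∂ᵢf(q) = ∑ⱼ qⱼ ∂ⱼf(q) ∂ᵢg(q) = d · f(q) · ∂ᵢg(q) = 0`,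
so `g(q) = 0`; at `q = 0` the polynomial `g` vanishes since `e > 0`. Hence `g` vanishes on the zero
locus of `(f) + m₂(f,g)` and lies in its radical by the Nullstellensatz.
-/

open MvPolynomial

namespace Ideal

theorem radical_sup_span_singleton_of_mem_radical {R : Type*} [CommSemiring R] {I : Ideal R}
    {g : R} (hg : g ∈ I.radical) : (I ⊔ span {g}).radical = I.radical :=
  le_antisymm
    (radical_le_radical_iff.2 (sup_le le_radical (span_le.2 (Set.singleton_subset_iff.2 hg))))
    (radical_mono le_sup_left)

end Ideal

namespace MvPolynomial

variable {σ k : Type*} [Field k]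

theorem mem_radical_of_forall_eval_eq_zero [IsAlgClosed k] [Finite σ]
    {I : Ideal (MvPolynomial σ k)} {g : MvPolynomial σ k}
    (h : ∀ x : σ → k, (∀ p ∈ I, eval x p = 0) → eval x g = 0) : g ∈ I.radical := by
  rw [← vanishingIdeal_zeroLocus_eq_radical (K := k)]
  exact fun x hx => h x hx

namespace IsHomogeneous

variable {φ : MvPolynomial σ k} {n : ℕ}

theorem eval_zero_of_ne_zero (hφ : φ.IsHomogeneous n) (hn : n ≠ 0) : eval 0 φ = 0 := by
  rw [eval_zero, constantCoeff_eq]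
  exact hφ.coeff_eq_zero (by simpa using hn.symm)

theorem sum_mul_eval_pderiv [Fintype σ] (hφ : φ.IsHomogeneous n) (x : σ → k) :
    ∑ i, x i * eval x (pderiv i φ) = n * eval x φ := by
  simpa using congrArg (eval x) hφ.sum_X_mul_pderiv

theorem eval_eq_zero_of_eval_minors_eq_zero [Fintype σ] [CharZero k]
    {f g : MvPolynomial σ k} {d e : ℕ} (hf : f.IsHomogeneous d) (hg : g.IsHomogeneous e)
    (he : e ≠ 0) {x : σ → k} (hfx : eval x f = 0) {i : σ} (hi : eval x (pderiv i f) ≠ 0)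
    (hminors : ∀ j, eval x (pderiv i f * pderiv j g - pderiv j f * pderiv i g) = 0) :
    eval x g = 0 := by
  have hminor (j : σ) : eval x (pderiv i f) * eval x (pderiv j g) =
      eval x (pderiv j f) * eval x (pderiv i g) := by
    simpa [sub_eq_zero] using hminors j
  have key : (e : k) * eval x g * eval x (pderiv i f) = 0 :=
    calc (e : k) * eval x g * eval x (pderiv i f)
        = ∑ j, x j * (eval x (pderiv i f) * eval x (pderiv j g)) := by
          rw [← hg.sum_mul_eval_pderiv, Finset.sum_mul]
          exact Finset.sum_congr rfl fun j _ => by ring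
      _ = ∑ j, x j * eval x (pderiv j f) * eval x (pderiv i g) :=
          Finset.sum_congr rfl fun j _ => by rw [hminor j, mul_assoc]
      _ = 0 := by rw [← Finset.sum_mul, hf.sum_mul_eval_pderiv, hfx, mul_zero, zero_mul]
  simpa [he, hi] using key

end IsHomogeneous

end MvPolynomial

theorem stmt_1_general (n d e : ℕ) (he : 0 < e)
    (f g : MvPolynomial (Fin (n + 1)) ℂ)
    (hf : f.IsHomogeneous d) (hg : g.IsHomogeneous e)
    (hsmooth : ∀ q : Fin (n + 1) → ℂ, q ≠ 0 → ∃ i, eval q (pderiv i f) ≠ 0)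
    (m2 : Ideal (MvPolynomial (Fin (n + 1)) ℂ))
    (hm2 : m2 = Ideal.span (Set.range fun ij : Fin (n + 1) × Fin (n + 1) =>
      pderiv ij.1 f * pderiv ij.2 g - pderiv ij.2 f * pderiv ij.1 g)) :
    (Ideal.span {f} ⊔ m2).radical = (Ideal.span {f, g} ⊔ m2).radical := by
  rw [Ideal.span_insert, sup_right_comm]
  refine (Ideal.radical_sup_span_singleton_of_mem_radical ?_).symm
  refine mem_radical_of_forall_eval_eq_zero fun q hq => ?_
  rcases eq_or_ne q 0 with rfl | hq0
  · exact hg.eval_zero_of_ne_zero he.ne'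
  obtain ⟨i, hi⟩ := hsmooth q hq0
  refine hf.eval_eq_zero_of_eval_minors_eq_zero hg he.ne' ?_ hi fun j => ?_
  · exact hq f (Ideal.mem_sup_left (Ideal.mem_span_singleton_self f))
  · exact hq _ (Ideal.mem_sup_right (hm2 ▸ Ideal.subset_span ⟨(i, j), rfl⟩))

/-- The ideals `I(f,g) = (f) + m₂(f,g)` and `J(f,g) = (f) + (g) + m₂(f,g)`
have the same radical when `V(f)` is smooth. -/
theorem stmt_1 (n d e : ℕ) (hd : 0 < d) (he : 0 < e)
    (f g : MvPolynomial (Fin (n + 1)) ℂ)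
    (hf : f.IsHomogeneous d) (hg : g.IsHomogeneous e)
    (hsmooth : ∀ q : Fin (n + 1) → ℂ, q ≠ 0 → ∃ i, eval q (pderiv i f) ≠ 0)
    (m2 : Ideal (MvPolynomial (Fin (n + 1)) ℂ))
    (hm2 : m2 = Ideal.span (Set.range fun ij : Fin (n + 1) × Fin (n + 1) =>
      pderiv ij.1 f * pderiv ij.2 g - pderiv ij.2 f * pderiv ij.1 g)) :
    (Ideal.span {f} ⊔ m2).radical = (Ideal.span {f, g} ⊔ m2).radical :=
  stmt_1_general n d e he f g hf hg hsmooth m2 hm2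
end

section
/- Let f, g be homogeneous polynomials in C[x_0,...,x_n] with V(f) smooth. Then dim_C S/((f)+m_2(f,g)) < ∞ if and only if dim_C S/((f)+(g)+m_2(f,g)) < ∞. -/
/-!
By the Nullstellensatz, `S ⧸ I` is finite dimensional exactly when `V(I) ⊆ {0}`, provided `I` is
generated by homogeneous polynomials (so that `V(I)` is a cone, and a finite cone is `{0}`).
It therefore suffices to compare zero loci. Euler's identity gives
`∑ⱼ xⱼ (∂ᵢf ∂ⱼg - ∂ⱼf ∂ᵢg) = e ∂ᵢf g - d f ∂ᵢg`, so `∂ᵢf g ∈ (f) + m₂(f,g)`; at a nonzero point of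
`V((f) + m₂(f,g))` some `∂ᵢf` is nonzero by smoothness, hence `g` vanishes there too.
-/

open MvPolynomial

namespace MvPolynomial

variable {σ K : Type*} [Field K]

lemma IsHomogeneous.eval_smul {R : Type*} [CommSemiring R] {φ : MvPolynomial σ R} {n : ℕ}
    (hφ : φ.IsHomogeneous n) (t : R) (x : σ → R) : eval (t • x) φ = t ^ n * eval x φ := by
  rw [eval_eq, eval_eq, Finset.mul_sum]
  refine Finset.sum_congr rfl fun m hm => ?_
  have hdeg : ∑ i ∈ m.support, m i = n := by
    rw [← Finsupp.degree_apply, Finsupp.degree_eq_weight_one]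
    exact hφ (mem_support_iff.mp hm)
  simp only [Pi.smul_apply, smul_eq_mul, mul_pow, Finset.prod_mul_distrib,
    Finset.prod_pow_eq_pow_sum, hdeg]
  ring

theorem finiteDimensional_quotient_of_zeroLocus_subset [IsAlgClosed K] [Finite σ]
    {I : Ideal (MvPolynomial σ K)} (h : zeroLocus K I ⊆ {0}) :
    FiniteDimensional K (MvPolynomial σ K ⧸ I) := by
  let mk := Ideal.Quotient.mkₐ K I
  have hX : ∀ i, IsIntegral K (mk (X i)) := fun i => by
    have hrad : X i ∈ I.radical := by
      rw [← vanishingIdeal_zeroLocus_eq_radical (K := K)]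
      intro x hx
      rw [h hx]
      simp
    obtain ⟨N, hN⟩ := hrad
    refine ⟨Polynomial.X ^ N, Polynomial.monic_X_pow N, ?_⟩
    rw [Polynomial.eval₂_X_pow, ← map_pow]
    exact Ideal.Quotient.eq_zero_iff_mem.mpr hN
  have hadjoin : Algebra.adjoin K (Set.range fun i => mk (X i)) = ⊤ := by
    rw [Set.range_comp' mk X, ← AlgHom.map_adjoin, adjoin_range_X, Algebra.map_top,
      AlgHom.range_eq_top]
    exact Ideal.Quotient.mkₐ_surjective K I
  refine Module.finite_def.2 ?_
  rw [← Algebra.top_toSubmodule, ← hadjoin]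
  exact fg_adjoin_of_finite (Set.finite_range _) (Set.forall_mem_range.2 hX)

theorem finite_zeroLocus_of_finiteDimensional [Finite σ] {I : Ideal (MvPolynomial σ K)}
    [FiniteDimensional K (MvPolynomial σ K ⧸ I)] : (zeroLocus K I).Finite := by
  have hcoord : ∀ i, ∃ P : Polynomial K, P ≠ 0 ∧ Polynomial.aeval (X i) P ∈ I := fun i => by
    obtain ⟨P, hPm, hP⟩ :=
      (Algebra.IsIntegral.of_finite K (MvPolynomial σ K ⧸ I)).isIntegral
        (Ideal.Quotient.mkₐ K I (X i))
    refine ⟨P, hPm.ne_zero, ?_⟩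
    rw [← Ideal.Quotient.eq_zero_iff_mem, ← Ideal.Quotient.mkₐ_eq_mk K,
      ← Polynomial.aeval_algHom_apply, ← hP, Polynomial.aeval_def]
  choose P hP0 hPI using hcoord
  refine (Set.Finite.pi fun i => Polynomial.finite_setOfPred_isRoot (hP0 i)).subset
    fun x hx i _ => ?_
  have hroot := hx _ (hPI i)
  rwa [← Polynomial.aeval_algHom_apply, aeval_X] at hroot

theorem smul_mem_zeroLocus_span {G : Set (MvPolynomial σ K)}
    (hG : ∀ p ∈ G, ∃ n, p.IsHomogeneous n) {x : σ → K} (hx : x ∈ zeroLocus K (Ideal.span G))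
    (t : K) : t • x ∈ zeroLocus K (Ideal.span G) := by
  rw [zeroLocus_span] at hx ⊢
  intro p hp
  obtain ⟨n, hn⟩ := hG p hp
  have hxp := hx p hp
  change eval x p = 0 at hxp
  change eval (t • x) p = 0
  rw [hn.eval_smul, hxp, mul_zero]

theorem finiteDimensional_quotient_span_iff [IsAlgClosed K] [Finite σ]
    {G : Set (MvPolynomial σ K)} (hG : ∀ p ∈ G, ∃ n, p.IsHomogeneous n) :
    FiniteDimensional K (MvPolynomial σ K ⧸ Ideal.span G) ↔ zeroLocus K (Ideal.span G) ⊆ {0} := by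
  refine ⟨fun _ x hx => ?_, finiteDimensional_quotient_of_zeroLocus_subset⟩
  by_contra hx0
  exact Set.infinite_of_injective_forall_mem (smul_left_injective K hx0)
    (smul_mem_zeroLocus_span hG hx) finite_zeroLocus_of_finiteDimensional

section Jacobian

variable {R : Type*} [CommRing R]

def jacobianMinors (f g : MvPolynomial σ R) : Set (MvPolynomial σ R) :=
  Set.range fun ij : σ × σ => pderiv ij.1 f * pderiv ij.2 g - pderiv ij.2 f * pderiv ij.1 g

variable {f g p : MvPolynomial σ R} {d e : ℕ}

theorem isHomogeneous_of_mem_jacobianMinors (hf : f.IsHomogeneous d) (hg : g.IsHomogeneous e)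
    (hp : p ∈ jacobianMinors f g) : p.IsHomogeneous (d - 1 + (e - 1)) := by
  obtain ⟨⟨i, j⟩, rfl⟩ := hp
  exact (hf.pderiv.mul hg.pderiv).sub (hf.pderiv.mul hg.pderiv)

theorem sum_X_mul_jacobianMinor [Fintype σ] (hf : f.IsHomogeneous d) (hg : g.IsHomogeneous e)
    (i : σ) :
    ∑ j, X j * (pderiv i f * pderiv j g - pderiv j f * pderiv i g) =
      pderiv i f * (e • g) - (d • f) * pderiv i g := by
  rw [← hf.sum_X_mul_pderiv, ← hg.sum_X_mul_pderiv, Finset.mul_sum, Finset.sum_mul,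
    ← Finset.sum_sub_distrib]
  exact Finset.sum_congr rfl fun j _ => by ring

end Jacobian

variable [Fintype σ] [CharZero K] {f g : MvPolynomial σ K} {d e : ℕ}

theorem pderiv_mul_mem_span_sup_span_jacobianMinors (hf : f.IsHomogeneous d)
    (hg : g.IsHomogeneous e) (he : e ≠ 0) (i : σ) :
    pderiv i f * g ∈ Ideal.span {f} ⊔ Ideal.span (jacobianMinors f g) := by
  have hmem : (e : MvPolynomial σ K) * (pderiv i f * g) ∈
      Ideal.span {f} ⊔ Ideal.span (jacobianMinors f g) := by
    have heq : (e : MvPolynomial σ K) * (pderiv i f * g) = pderiv i g * d * f +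
        ∑ j, X j * (pderiv i f * pderiv j g - pderiv j f * pderiv i g) := by
      rw [sum_X_mul_jacobianMinor hf hg, nsmul_eq_mul, nsmul_eq_mul]
      ring
    rw [heq]
    refine add_mem (Ideal.mem_sup_left (Ideal.mul_mem_left _ _ (Ideal.mem_span_singleton_self f)))
      (Ideal.mem_sup_right (Ideal.sum_mem _ fun j _ => Ideal.mul_mem_left _ _ ?_))
    exact Ideal.subset_span ⟨(i, j), rfl⟩
  have hunit : IsUnit (e : MvPolynomial σ K) := by
    rw [← map_natCast (C : K →+* MvPolynomial σ K)]
    exact (isUnit_iff_ne_zero.2 (Nat.cast_ne_zero.2 he)).map C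
  exact (Ideal.unit_mul_mem_iff_mem _ hunit).1 hmem

theorem zeroLocus_span_union_jacobianMinors (hf : f.IsHomogeneous d)
    (hg : g.IsHomogeneous e) (he : e ≠ 0)
    (hsmooth : ∀ x : σ → K, x ≠ 0 → ∃ i, eval x (pderiv i f) ≠ 0) :
    zeroLocus K (Ideal.span ({f} ∪ jacobianMinors f g)) =
      zeroLocus K (Ideal.span ({f, g} ∪ jacobianMinors f g)) := by
  refine (zeroLocus_anti_mono (Ideal.span_mono
    (Set.union_subset_union_left _ (by simp)))).antisymm' fun x hx => ?_
  have hgx : eval x g = 0 := by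
    by_cases hx0 : x = 0
    · rw [hx0, ← zero_smul K (0 : σ → K), hg.eval_smul, zero_pow he, zero_mul]
    · obtain ⟨i, hi⟩ := hsmooth x hx0
      have hx_i : eval x (pderiv i f * g) = 0 := hx _ <| by
        rw [Ideal.span_union]
        exact pderiv_mul_mem_span_sup_span_jacobianMinors hf hg he i
      rw [map_mul] at hx_i
      exact (mul_eq_zero.1 hx_i).resolve_left hi
  rw [zeroLocus_span] at hx ⊢
  rintro p ((rfl | rfl) | hp)
  · exact hx p (Or.inl rfl)
  · exact hgx
  · exact hx p (Or.inr hp)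

end MvPolynomial

theorem stmt_2_general (n d e : ℕ) (he : 0 < e)
    (f g : MvPolynomial (Fin (n + 1)) ℂ)
    (hf : f.IsHomogeneous d) (hg : g.IsHomogeneous e)
    (hsmooth : ∀ q : Fin (n + 1) → ℂ, q ≠ 0 → ∃ i, eval q (pderiv i f) ≠ 0)
    (m2 : Ideal (MvPolynomial (Fin (n + 1)) ℂ))
    (hm2 : m2 = Ideal.span (Set.range fun ij : Fin (n + 1) × Fin (n + 1) =>
      pderiv ij.1 f * pderiv ij.2 g - pderiv ij.2 f * pderiv ij.1 g)) :
    FiniteDimensional ℂ (MvPolynomial (Fin (n + 1)) ℂ ⧸ (Ideal.span {f} ⊔ m2)) ↔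
      FiniteDimensional ℂ (MvPolynomial (Fin (n + 1)) ℂ ⧸ (Ideal.span {f, g} ⊔ m2)) := by
  replace hm2 : m2 = Ideal.span (jacobianMinors f g) := hm2
  have hG : ∀ p ∈ {f, g} ∪ jacobianMinors f g, ∃ k, p.IsHomogeneous k := by
    rintro p ((rfl | rfl) | hp)
    exacts [⟨d, hf⟩, ⟨e, hg⟩, ⟨_, isHomogeneous_of_mem_jacobianMinors hf hg hp⟩]
  rw [hm2, ← Ideal.span_union, ← Ideal.span_union,
    finiteDimensional_quotient_span_iff (G := {f} ∪ _) fun p hp => hG p (Or.imp_left Or.inl hp),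
    finiteDimensional_quotient_span_iff hG,
    zeroLocus_span_union_jacobianMinors hf hg he.ne' hsmooth]

/-- `dim S/((f)+m₂(f,g)) < ∞` iff `dim S/((f)+(g)+m₂(f,g)) < ∞` when `V(f)` is smooth. -/
theorem stmt_2 (n d e : ℕ) (hd : 0 < d) (he : 0 < e)
    (f g : MvPolynomial (Fin (n + 1)) ℂ)
    (hf : f.IsHomogeneous d) (hg : g.IsHomogeneous e)
    (hsmooth : ∀ q : Fin (n + 1) → ℂ, q ≠ 0 → ∃ i, eval q (pderiv i f) ≠ 0)
    (m2 : Ideal (MvPolynomial (Fin (n + 1)) ℂ))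
    (hm2 : m2 = Ideal.span (Set.range fun ij : Fin (n + 1) × Fin (n + 1) =>
      pderiv ij.1 f * pderiv ij.2 g - pderiv ij.2 f * pderiv ij.1 g)) :
    FiniteDimensional ℂ (MvPolynomial (Fin (n + 1)) ℂ ⧸ (Ideal.span {f} ⊔ m2)) ↔
      FiniteDimensional ℂ (MvPolynomial (Fin (n + 1)) ℂ ⧸ (Ideal.span {f, g} ⊔ m2)) :=
  stmt_2_general n d e he f g hf hg hsmooth m2 hm2
end
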